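/- Let a ≤ b ≤ c be positive integers with gcd(b-a, c-b) = 1. Consider the subgroup L of ℤ³ generated by all permutations of the vector (a, b, c), i.e., by (a,b,c), (b,a,c), (a,c,b), (b,c,a), (c,a,b), (c,b,a). Then L contains (1,-1,0), (0,1,-1), and (1,0,-1). -/
import Mathlib


theorem stmt12 (a b c : ℤ) (ha : 0 < a) (hab : a ≤ b) (hbc : b ≤ c)
    (hgcd : Int.gcd (b - a) (c - b) = 1) :
    ∀ v ∈ ({(1, -1, 0), (0, 1, -1), (1, 0, -1)} : Set (ℤ × ℤ × ℤ)),
      v ∈ AddSubgroup.closure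
        ({(a, b, c), (b, a, c), (a, c, b), (b, c, a), (c, a, b), (c, b, a)} :
          Set (ℤ × ℤ × ℤ)) := by
  set S : Set (ℤ × ℤ × ℤ) := {(a, b, c), (b, a, c), (a, c, b), (b, c, a), (c, a, b), (c, b, a)}
  set L := AddSubgroup.closure S
  have bez : (b - a) * Int.gcdA (b - a) (c - b) + (c - b) * Int.gcdB (b - a) (c - b) = 1 := by
    have := Int.gcd_eq_gcd_ab (b - a) (c - b)
    omega
  set u := Int.gcdA (b - a) (c - b)
  set v := Int.gcdB (b - a) (c - b)
  have m1 : ((a, b, c) : ℤ × ℤ × ℤ) ∈ L := AddSubgroup.subset_closure (by simp [S])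
  have m2 : ((b, a, c) : ℤ × ℤ × ℤ) ∈ L := AddSubgroup.subset_closure (by simp [S])
  have m3 : ((a, c, b) : ℤ × ℤ × ℤ) ∈ L := AddSubgroup.subset_closure (by simp [S])
  have m4 : ((b, c, a) : ℤ × ℤ × ℤ) ∈ L := AddSubgroup.subset_closure (by simp [S])
  have m5 : ((c, a, b) : ℤ × ℤ × ℤ) ∈ L := AddSubgroup.subset_closure (by simp [S])
  have m6 : ((c, b, a) : ℤ × ℤ × ℤ) ∈ L := AddSubgroup.subset_closure (by simp [S])
  have h1 : ((1, -1, 0) : ℤ × ℤ × ℤ) ∈ L := by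
    have : ((1, -1, 0) : ℤ × ℤ × ℤ) =
        u • (((b, a, c) : ℤ × ℤ × ℤ) - (a, b, c)) + v • (((c, b, a) : ℤ × ℤ × ℤ) - (b, c, a)) := by
      simp only [Prod.smul_def, Prod.sub_def, Prod.mk_add_mk, Prod.mk.injEq, smul_eq_mul]
      refine ⟨?_, ?_, ?_⟩ <;> ring_nf <;> linarith [bez]
    rw [this]
    exact L.add_mem (L.zsmul_mem (L.sub_mem m2 m1) u) (L.zsmul_mem (L.sub_mem m6 m4) v)
  have h2 : ((0, 1, -1) : ℤ × ℤ × ℤ) ∈ L := by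
    have : ((0, 1, -1) : ℤ × ℤ × ℤ) =
        u • (((c, b, a) : ℤ × ℤ × ℤ) - (c, a, b)) + v • (((a, c, b) : ℤ × ℤ × ℤ) - (a, b, c)) := by
      simp only [Prod.smul_def, Prod.sub_def, Prod.mk_add_mk, Prod.mk.injEq, smul_eq_mul]
      refine ⟨?_, ?_, ?_⟩ <;> ring_nf <;> linarith [bez]
    rw [this]
    exact L.add_mem (L.zsmul_mem (L.sub_mem m6 m5) u) (L.zsmul_mem (L.sub_mem m3 m1) v)
  have h3 : ((1, 0, -1) : ℤ × ℤ × ℤ) ∈ L := by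
    have : ((1, 0, -1) : ℤ × ℤ × ℤ) = (1, -1, 0) + ((0, 1, -1) : ℤ × ℤ × ℤ) := by decide
    rw [this]; exact L.add_mem h1 h2
  intro w hw
  simp only [Set.mem_insert_iff, Set.mem_singleton_iff] at hw
  rcases hw with rfl | rfl | rfl <;> assumption
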